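/- For every dimension d ≥ 1, every k ≥ 1, and every λ > 0, the limit lim_{t→∞} \bar F_{k,λ}(t) exists and equals a_{k,λ} := inf_{t>0} \bar F_{k,λ}(t). -/

import Mathlib

open MeasureTheory ProbabilityTheory Filter

noncomputable instance instDecEqEuclidean (d : ℕ) :
    DecidableEq (EuclideanSpace ℝ (Fin d)) := Classical.decEq _

/-- `maxColorable d k r V` is the maximum number of vertices of the geometric
graph `G_r(V)` (edges between distinct points of `V` at Euclidean distance at
most `r`) that can be properly colored with `k` colors, i.e. the maximum
cardinality of a subset `S ⊆ V` admitting a proper `k`-coloring. -/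
noncomputable def maxColorable (d k : ℕ) (r : ℝ)
    (V : Finset (EuclideanSpace ℝ (Fin d))) : ℕ :=
  sSup {m : ℕ | ∃ S : Finset (EuclideanSpace ℝ (Fin d)), S ⊆ V ∧ S.card = m ∧
    ∃ c : EuclideanSpace ℝ (Fin d) → Fin k,
      ∀ u ∈ S, ∀ v ∈ S, u ≠ v → dist u v ≤ r → c u ≠ c v}

/-- The unit cube `[0,1]^d`. -/
def unitCube (d : ℕ) : Set (EuclideanSpace ℝ (Fin d)) :=
  {x | ∀ i, x i ∈ Set.Icc (0 : ℝ) 1}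

/-- The uniform distribution on the unit cube `[0,1]^d` (Lebesgue measure
restricted to the cube, which has total mass one). -/
noncomputable def uniformCube (d : ℕ) : Measure (EuclideanSpace ℝ (Fin d)) :=
  volume.restrict (unitCube d)

/-- `EH d k r n = E[H_{k,r}(n)] = E[N_{k,r}({X_1,…,X_n})]` for `X_1,…,X_n`
i.i.d. uniform on the unit cube `[0,1]^d`. -/
noncomputable def EH (d k : ℕ) (r : ℝ) (n : ℕ) : ℝ :=
  ∫ x : Fin n → EuclideanSpace ℝ (Fin d),
    (maxColorable d k r (Finset.image x Finset.univ) : ℝ)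
    ∂(Measure.pi fun _ => uniformCube d)

/-- `EF d k lam t = E[F_{k,lam}(t)] = ∑_n P(Po(lam t^d) = n) E[H_{k,1/t}(n)]`,
the expected maximum number of `k`-colorable vertices of the unit-distance
geometric graph on a Poisson process of intensity `lam` in `[0,t]^d`. -/
noncomputable def EF (d k : ℕ) (lam t : ℝ) : ℝ :=
  ∑' n : ℕ, poissonPMFReal (Real.toNNReal (lam * t ^ d)) n * EH d k (1 / t) n

/-- The normalized expectation `\bar F_{k,lam}(t) = E[F_{k,lam}(t)]/(lam t^d)`. -/
noncomputable def Fbar (d k : ℕ) (lam t : ℝ) : ℝ :=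
  EF d k lam t / (lam * t ^ d)

/-- The constant `a_{k,lam} = inf_{t>0} \bar F_{k,lam}(t)`. -/
noncomputable def aConst (d k : ℕ) (lam : ℝ) : ℝ :=
  sInf {x : ℝ | ∃ t : ℝ, 0 < t ∧ x = Fbar d k lam t}

/-- The volume `V_d(r) = π^{d/2} r^d / Γ(d/2 + 1)` of the `d`-dimensional
Euclidean ball of radius `r`. -/
noncomputable def ballVol (d : ℕ) (r : ℝ) : ℝ :=
  Real.pi ^ ((d : ℝ) / 2) * r ^ d / Real.Gamma ((d : ℝ) / 2 + 1)


/-!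
Rescale `[0,t]^d` to the unit cube and, for `s ≤ t` and `m = ⌊t/s⌋`, cover the subcube
`[0, m s/t]^d` by `m^d` grid cells of side `s/t`. A proper colouring restricts to every piece of
a cover, so the number of colourable points is subadditive over the cells, and every point outside
the cells costs at most one. The points of `n` i.i.d. uniform samples that fall in a cell form a
binomial number of i.i.d. uniform samples of the cell, and rescaling the cell to the unit cube turns
the radius `1/t` into `1/s`. Mixing the binomial over `n ~ Poisson(λ t^d)` gives
`Poisson(λ s^d)`, hence `E F(t) ≤ m^d E F(s) + λ t^d (1 - (m s/t)^d)`, i.e.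
`\bar F(t) ≤ \bar F(s) + 1 - (1 - s/t)^d`. Letting `t → ∞` for a nearly optimal `s` squeezes
`\bar F(t)` onto its infimum.
-/

open scoped ENNReal NNReal
open Finset ProbabilityTheory

section Coloring

variable {d k : ℕ} {r : ℝ}

def IsGeomColorable (d k : ℕ) (r : ℝ) (S : Finset (EuclideanSpace ℝ (Fin d))) : Prop :=
  ∃ c : EuclideanSpace ℝ (Fin d) → Fin k, ∀ u ∈ S, ∀ v ∈ S, u ≠ v → dist u v ≤ r → c u ≠ c v

lemma IsGeomColorable.mono {S T : Finset (EuclideanSpace ℝ (Fin d))} (hST : S ⊆ T)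
    (hT : IsGeomColorable d k r T) : IsGeomColorable d k r S :=
  let ⟨c, hc⟩ := hT
  ⟨c, fun u hu v hv => hc u (hST hu) v (hST hv)⟩

lemma maxColorable_eq_sSup (V : Finset (EuclideanSpace ℝ (Fin d))) :
    maxColorable d k r V = sSup {m | ∃ S ⊆ V, #S = m ∧ IsGeomColorable d k r S} := rfl

lemma bddAbove_colorableCards (V : Finset (EuclideanSpace ℝ (Fin d))) :
    BddAbove {m | ∃ S ⊆ V, #S = m ∧ IsGeomColorable d k r S} :=
  ⟨#V, by rintro _ ⟨S, hSV, rfl, -⟩; exact card_le_card hSV⟩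

lemma card_le_maxColorable {S V : Finset (EuclideanSpace ℝ (Fin d))} (hSV : S ⊆ V)
    (hS : IsGeomColorable d k r S) : #S ≤ maxColorable d k r V :=
  (maxColorable_eq_sSup V).symm ▸ le_csSup (bddAbove_colorableCards V) ⟨S, hSV, rfl, hS⟩

lemma maxColorable_le_iff {V : Finset (EuclideanSpace ℝ (Fin d))} {m : ℕ} :
    maxColorable d k r V ≤ m ↔ ∀ S ⊆ V, IsGeomColorable d k r S → #S ≤ m :=
  ⟨fun h S hSV hS => (card_le_maxColorable hSV hS).trans h, fun h =>
    (maxColorable_eq_sSup V).symm ▸ csSup_le' (by rintro _ ⟨S, hSV, rfl, hS⟩; exact h S hSV hS)⟩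

lemma maxColorable_le_card (V : Finset (EuclideanSpace ℝ (Fin d))) :
    maxColorable d k r V ≤ #V :=
  maxColorable_le_iff.2 fun _ hSV _ => card_le_card hSV

lemma exists_card_eq_maxColorable (hk : 1 ≤ k) (V : Finset (EuclideanSpace ℝ (Fin d))) :
    ∃ S ⊆ V, IsGeomColorable d k r S ∧ #S = maxColorable d k r V := by
  have hne : {m | ∃ S ⊆ V, #S = m ∧ IsGeomColorable d k r S}.Nonempty :=
    ⟨0, ∅, empty_subset V, rfl, fun _ => ⟨0, hk⟩, by simp⟩
  obtain ⟨S, hSV, hS, hc⟩ := Nat.sSup_mem hne (bddAbove_colorableCards V)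
  exact ⟨S, hSV, hc, hS⟩

lemma maxColorable_mono {V W : Finset (EuclideanSpace ℝ (Fin d))} (hVW : V ⊆ W) :
    maxColorable d k r V ≤ maxColorable d k r W :=
  maxColorable_le_iff.2 fun _ hSV hS => card_le_maxColorable (hSV.trans hVW) hS

lemma maxColorable_union_le (V W : Finset (EuclideanSpace ℝ (Fin d))) :
    maxColorable d k r (V ∪ W) ≤ maxColorable d k r V + maxColorable d k r W := by
  refine maxColorable_le_iff.2 fun S hS hc => ?_
  calc #S ≤ #(S.filter (· ∈ V) ∪ S.filter (· ∈ W)) := by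
        refine card_le_card fun p hp => ?_
        simpa [hp] using mem_union.1 (hS hp)
    _ ≤ #(S.filter (· ∈ V)) + #(S.filter (· ∈ W)) := card_union_le _ _
    _ ≤ _ := add_le_add
        (card_le_maxColorable (fun p hp => (mem_filter.1 hp).2) (hc.mono (filter_subset _ _)))
        (card_le_maxColorable (fun p hp => (mem_filter.1 hp).2) (hc.mono (filter_subset _ _)))

lemma maxColorable_biUnion_le {ι : Type*} (s : Finset ι)
    (W : ι → Finset (EuclideanSpace ℝ (Fin d))) :
    maxColorable d k r (s.biUnion W) ≤ ∑ i ∈ s, maxColorable d k r (W i) := by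
  classical
  refine maxColorable_le_iff.2 fun S hS hc => ?_
  calc #S ≤ #(s.biUnion fun i => S.filter (· ∈ W i)) := by
        refine card_le_card fun p hp => ?_
        obtain ⟨i, hi, hpi⟩ := mem_biUnion.1 (hS hp)
        exact mem_biUnion.2 ⟨i, hi, mem_filter.2 ⟨hp, hpi⟩⟩
    _ ≤ ∑ i ∈ s, #(S.filter (· ∈ W i)) := card_biUnion_le
    _ ≤ _ := sum_le_sum fun i _ => card_le_maxColorable (fun p hp => (mem_filter.1 hp).2)
        (hc.mono (filter_subset _ _))

lemma maxColorable_le_sum_filter_add {ι : Type*} [Fintype ι]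
    (Q : ι → Set (EuclideanSpace ℝ (Fin d))) {C : Set (EuclideanSpace ℝ (Fin d))}
    (hC : C ⊆ ⋃ i, Q i) [∀ i, DecidablePred (· ∈ Q i)] [DecidablePred (· ∈ Cᶜ)]
    (V : Finset (EuclideanSpace ℝ (Fin d))) :
    maxColorable d k r V ≤ ∑ i, maxColorable d k r (V.filter (· ∈ Q i)) + #(V.filter (· ∈ Cᶜ)) := by
  classical
  have hcover : V ⊆ V.filter (· ∈ Cᶜ) ∪ univ.biUnion fun i => V.filter (· ∈ Q i) := by
    intro y hy
    by_cases hyC : y ∈ C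
    · obtain ⟨i, hi⟩ := Set.mem_iUnion.1 (hC hyC)
      exact mem_union_right _ (mem_biUnion.2 ⟨i, mem_univ i, mem_filter.2 ⟨hy, hi⟩⟩)
    · exact mem_union_left _ (mem_filter.2 ⟨hy, hyC⟩)
  calc maxColorable d k r V
      ≤ maxColorable d k r (V.filter (· ∈ Cᶜ)) +
          maxColorable d k r (univ.biUnion fun i => V.filter (· ∈ Q i)) :=
        (maxColorable_mono hcover).trans (maxColorable_union_le _ _)
    _ ≤ #(V.filter (· ∈ Cᶜ)) + ∑ i, maxColorable d k r (V.filter (· ∈ Q i)) :=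
        add_le_add (maxColorable_le_card _) (maxColorable_biUnion_le _ _)
    _ = _ := add_comm _ _

lemma maxColorable_image_le_sum_filter_add {ι κ : Type*} [Fintype ι] [Fintype κ]
    (Q : ι → Set (EuclideanSpace ℝ (Fin d))) {C : Set (EuclideanSpace ℝ (Fin d))}
    (hC : C ⊆ ⋃ i, Q i) [∀ i, DecidablePred (· ∈ Q i)] [DecidablePred (· ∈ Cᶜ)]
    (x : κ → EuclideanSpace ℝ (Fin d)) :
    maxColorable d k r (univ.image x) ≤
      ∑ i, maxColorable d k r ((univ.image x).filter (· ∈ Q i)) + #(univ.filter (x · ∈ Cᶜ)) := by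
  refine (maxColorable_le_sum_filter_add Q hC _).trans (Nat.add_le_add_left ?_ _)
  rw [filter_image]
  exact card_image_le

lemma isGeomColorable_image_iff (hk : 1 ≤ k) {α : Type*} {φ : α → EuclideanSpace ℝ (Fin d)}
    {I : Finset α} (hφ : Set.InjOn φ I) :
    IsGeomColorable d k r (I.image φ) ↔
      ∃ γ : α → Fin k, ∀ i ∈ I, ∀ j ∈ I, i ≠ j → dist (φ i) (φ j) ≤ r → γ i ≠ γ j := by
  classical
  constructor
  · rintro ⟨c, hc⟩
    exact ⟨c ∘ φ, fun i hi j hj hij => hc _ (mem_image_of_mem φ hi) _ (mem_image_of_mem φ hj)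
      (hφ.ne hi hj hij)⟩
  · rintro ⟨γ, hγ⟩
    refine ⟨fun p => if h : ∃ i ∈ I, φ i = p then γ h.choose else ⟨0, hk⟩, ?_⟩
    simp only [mem_image]
    rintro _ ⟨i, hi, rfl⟩ _ ⟨j, hj, rfl⟩ hne hdist
    have hi' : ∃ i' ∈ I, φ i' = φ i := ⟨i, hi, rfl⟩
    have hj' : ∃ j' ∈ I, φ j' = φ j := ⟨j, hj, rfl⟩
    rw [dif_pos hi', dif_pos hj', hφ hi'.choose_spec.1 hi hi'.choose_spec.2,
      hφ hj'.choose_spec.1 hj hj'.choose_spec.2]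
    exact hγ i hi j hj (fun h => hne (h ▸ rfl)) hdist

lemma maxColorable_image_of_dist_eq (hk : 1 ≤ k)
    {φ : EuclideanSpace ℝ (Fin d) → EuclideanSpace ℝ (Fin d)} {c : ℝ} (hc : 0 < c)
    (hφ : ∀ u v, dist (φ u) (φ v) = c * dist u v) (V : Finset (EuclideanSpace ℝ (Fin d))) :
    maxColorable d k (c * r) (V.image φ) = maxColorable d k r V := by
  have hinj : Function.Injective φ := fun u v h => by
    simpa [hc.ne'] using (hφ u v).symm.trans (dist_eq_zero.2 h)
  have hcol : ∀ S, IsGeomColorable d k (c * r) (S.image φ) ↔ IsGeomColorable d k r S := by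
    intro S
    have hid := isGeomColorable_image_iff (r := r) hk (φ := id) (I := S)
      Function.injective_id.injOn
    rw [image_id] at hid
    rw [isGeomColorable_image_iff hk hinj.injOn, hid]
    simp only [hφ, mul_le_mul_iff_right₀ hc, id]
  refine le_antisymm (maxColorable_le_iff.2 fun S' hS' hc' => ?_)
    (maxColorable_le_iff.2 fun S hS hcS => ?_)
  · obtain ⟨S, hSV, rfl⟩ := subset_image_iff.1 hS'
    rw [card_image_of_injective _ hinj]
    exact card_le_maxColorable hSV ((hcol S).1 hc')
  · rw [← card_image_of_injective _ hinj]
    exact card_le_maxColorable (image_subset_image hS) ((hcol S).2 hcS)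

lemma le_maxColorable_image_iff (hk : 1 ≤ k) {ι : Type*} [Fintype ι]
    (x : ι → EuclideanSpace ℝ (Fin d)) (m : ℕ) :
    m ≤ maxColorable d k r (univ.image x) ↔
      ∃ I : Finset ι, m ≤ #I ∧ (∀ i ∈ I, ∀ j ∈ I, x i = x j → i = j) ∧
        ∃ γ : ι → Fin k, ∀ i ∈ I, ∀ j ∈ I, i ≠ j → dist (x i) (x j) ≤ r → γ i ≠ γ j := by
  constructor
  · intro hm
    obtain ⟨S, hSV, hS, hcard⟩ := exists_card_eq_maxColorable (r := r) hk (univ.image x)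
    obtain ⟨I, -, hinj, rfl⟩ := exists_subset_injOn_image_eq_of_surjOn Set.univ S
      fun p hp => by simpa using hSV hp
    rw [card_image_of_injOn hinj] at hcard
    exact ⟨I, hcard ▸ hm, fun i hi j hj => hinj hi hj, (isGeomColorable_image_iff hk hinj).1 hS⟩
  · rintro ⟨I, hm, hinj, hγ⟩
    have hinj' : Set.InjOn x I := fun i hi j hj => hinj i hi j hj
    calc m ≤ #(I.image x) := (card_image_of_injOn hinj').symm ▸ hm
      _ ≤ _ := card_le_maxColorable (image_subset_image (subset_univ I))
        ((isGeomColorable_image_iff hk hinj').2 hγ)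

lemma measurable_maxColorable_image (hk : 1 ≤ k) {ι : Type*} [Fintype ι] :
    Measurable fun x : ι → EuclideanSpace ℝ (Fin d) => maxColorable d k r (univ.image x) := by
  refine measurable_of_Ici fun m => ?_
  simp_rw [Set.preimage, Set.mem_Ici, le_maxColorable_image_iff hk]
  exact Measurable.setOf (by fun_prop)

lemma measurable_maxColorable_image_real (hk : 1 ≤ k) (r : ℝ) (ι : Type) [Fintype ι] :
    Measurable fun x : ι → EuclideanSpace ℝ (Fin d) => (maxColorable d k r (univ.image x) : ℝ) :=
  measurable_from_nat.comp (measurable_maxColorable_image hk)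

lemma abs_maxColorable_le_card (r : ℝ) (V : Finset (EuclideanSpace ℝ (Fin d))) :
    |(maxColorable d k r V : ℝ)| ≤ #V := by
  rw [abs_of_nonneg (Nat.cast_nonneg _)]
  exact_mod_cast maxColorable_le_card V

end Coloring

section Thinning

variable {Ω : Type*} [MeasurableSpace Ω] {μ : Measure Ω} {Q : Set Ω}

lemma setIntegral_univ_pi_eq_mul_integral_pi_cond {ι : Type*} [Fintype ι] [IsFiniteMeasure μ]
    (hQ0 : μ Q ≠ 0) (f : (ι → Ω) → ℝ) :
    ∫ y in Set.univ.pi fun _ => Q, f y ∂(Measure.pi fun _ => μ) =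
      μ.real Q ^ Fintype.card ι * ∫ y, f y ∂(Measure.pi fun _ => μ[|Q]) := by
  have hpi : Measure.pi (fun _ : ι => μ.restrict Q) =
      μ Q ^ Fintype.card ι • Measure.pi fun _ => μ[|Q] := by
    refine Measure.pi_eq fun s hs => ?_
    rw [Measure.smul_apply, Measure.pi_pi, smul_eq_mul, ← card_univ, ← prod_const,
      ← prod_mul_distrib]
    refine prod_congr rfl fun i _ => ?_
    rw [cond_apply' (hs i), ← mul_assoc, ENNReal.mul_inv_cancel hQ0 (measure_ne_top μ Q), one_mul,
      Measure.restrict_apply (hs i), Set.inter_comm]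
  rw [Measure.restrict_pi_pi, hpi, integral_smul_measure, measureReal_def, ENNReal.toReal_pow,
    smul_eq_mul]

lemma integral_indicator_univ_pi_ite {ι : Type} [Fintype ι] [DecidableEq ι]
    [IsProbabilityMeasure μ] (hQ : MeasurableSet Q) (T : Finset ι) (f : (T → Ω) → ℝ) :
    ∫ x, (Set.univ.pi fun i => if i ∈ T then Q else Qᶜ).indicator (fun x => f fun i => x i) x
        ∂(Measure.pi fun _ => μ) =
      μ.real Qᶜ ^ (Fintype.card ι - #T) * ∫ y in Set.univ.pi fun _ => Q, f y
        ∂(Measure.pi fun _ => μ) := by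
  set e := MeasurableEquiv.piEquivPiSubtypeProd (fun _ : ι => Ω) (· ∈ T)
  have hsplit : ∀ x : ι → Ω,
      (Set.univ.pi fun i => if i ∈ T then Q else Qᶜ).indicator (fun x => f fun i => x i) x =
        (Set.univ.pi fun _ => Q).indicator f (e x).1 *
          (Set.univ.pi fun _ => Qᶜ).indicator 1 (e x).2 := by
    intro x
    change _ = (Set.univ.pi fun _ => Q).indicator f (fun i : T => x i) *
      (Set.univ.pi fun _ => Qᶜ).indicator 1 (fun i : {i // i ∉ T} => x i)
    have hmem : x ∈ (Set.univ.pi fun i => if i ∈ T then Q else Qᶜ) ↔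
        (fun i : T => x i) ∈ Set.univ.pi (fun _ => Q) ∧
          (fun i : {i // i ∉ T} => x i) ∈ Set.univ.pi (fun _ => Qᶜ) := by
      simp only [Set.mem_univ_pi]
      refine ⟨fun h => ⟨fun i => by simpa [i.2] using h i, fun i => by simpa [i.2] using h i⟩,
        fun h i => ?_⟩
      by_cases hi : i ∈ T
      · simpa [hi] using h.1 ⟨i, hi⟩
      · simpa [hi] using h.2 ⟨i, hi⟩
    by_cases h₁ : (fun i : T => x i) ∈ Set.univ.pi (fun _ => Q) <;>
      by_cases h₂ : (fun i : {i // i ∉ T} => x i) ∈ Set.univ.pi (fun _ => Qᶜ) <;>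
      simp [Set.indicator, hmem, h₁, h₂]
  simp_rw [hsplit]
  rw [(measurePreserving_piEquivPiSubtypeProd (fun _ : ι => μ) (· ∈ T)).integral_comp
      e.measurableEmbedding (fun z => (Set.univ.pi fun _ => Q).indicator f z.1 *
        (Set.univ.pi fun _ => Qᶜ).indicator 1 z.2),
    integral_prod_mul, integral_indicator_one (MeasurableSet.univ_pi fun _ => hQ.compl),
    measureReal_def, Measure.pi_pi, prod_const, ENNReal.toReal_pow, ← measureReal_def,
    integral_indicator (MeasurableSet.univ_pi fun _ => hQ), mul_comm]
  congr 2
  · simp [Fintype.card_subtype_compl]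
  · convert rfl

section CountInSet

variable {ι : Type*} [Fintype ι] {R : Set Ω} [DecidablePred (· ∈ R)]

omit [MeasurableSpace Ω] in
lemma natCast_card_filter_mem_eq_sum_indicator (x : ι → Ω) :
    (#(univ.filter (x · ∈ R)) : ℝ) = ∑ i, R.indicator 1 (x i) := by
  rw [card_filter, Nat.cast_sum]
  exact sum_congr rfl fun i _ => by by_cases h : x i ∈ R <;> simp [h]

variable (μ) [IsProbabilityMeasure μ]

lemma integrable_card_filter_mem (hR : MeasurableSet R) :
    Integrable (fun x : ι → Ω => (#(univ.filter (x · ∈ R)) : ℝ)) (Measure.pi fun _ => μ) := by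
  simp_rw [natCast_card_filter_mem_eq_sum_indicator]
  exact integrable_finsetSum _ fun i _ =>
    ((integrable_const 1).indicator (measurable_pi_apply i hR)).congr (ae_of_all _ fun x => rfl)

lemma integral_card_filter_mem (hR : MeasurableSet R) :
    ∫ x : ι → Ω, (#(univ.filter (x · ∈ R)) : ℝ) ∂(Measure.pi fun _ => μ) =
      Fintype.card ι * μ.real R := by
  have heval : ∀ i : ι, ∫ x : ι → Ω, R.indicator 1 (x i) ∂(Measure.pi fun _ => μ) = μ.real R :=
    fun i => by
      rw [integral_comp_eval (X := fun _ : ι => Ω) (μ := fun _ => μ) (f := R.indicator (1 : Ω → ℝ))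
        (measurable_const.indicator hR).aestronglyMeasurable, integral_indicator_one hR]
  simp_rw [natCast_card_filter_mem_eq_sum_indicator]
  rw [integral_finsetSum _ fun i _ => ((integrable_const 1).indicator
    (measurable_pi_apply i hR)).congr (ae_of_all _ fun x => rfl)]
  simp_rw [heval, sum_const, card_univ, nsmul_eq_mul]

end CountInSet

variable [DecidableEq Ω]

lemma integral_comp_image_univ_of_equiv {α β : Type*} [Fintype α] [Fintype β] (e : α ≃ β)
    (ν : Measure Ω) [SigmaFinite ν] (g : Finset Ω → ℝ) :
    ∫ y : β → Ω, g (univ.image y) ∂(Measure.pi fun _ => ν) =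
      ∫ y : α → Ω, g (univ.image y) ∂(Measure.pi fun _ => ν) := by
  classical
  rw [← (measurePreserving_piCongrLeft (fun _ : β => ν) e).integral_comp']
  congr with y
  rw [← image_univ_equiv e, image_image]
  congr 2 with a
  simp [MeasurableEquiv.coe_piCongrLeft, Equiv.piCongrLeft_apply_apply]

omit [MeasurableSpace Ω] in
lemma comp_filter_image_eq_sum_indicator {ι : Type} [Fintype ι] [DecidableEq ι]
    [DecidablePred (· ∈ Q)] (g : Finset Ω → ℝ) (x : ι → Ω) :
    g ((univ.image x).filter (· ∈ Q)) = ∑ T : Finset ι,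
      (Set.univ.pi fun i => if i ∈ T then Q else Qᶜ).indicator
        (fun x => g (univ.image fun i : T => x i)) x := by
  have hmem : ∀ T : Finset ι,
      x ∈ (Set.univ.pi fun i => if i ∈ T then Q else Qᶜ) ↔ univ.filter (x · ∈ Q) = T := by
    intro T
    simp only [Set.mem_univ_pi, Finset.ext_iff, mem_filter, mem_univ, true_and]
    refine forall_congr' fun i => ?_
    by_cases hi : i ∈ T <;> simp [hi]
  rw [sum_eq_single_of_mem (univ.filter (x · ∈ Q)) (mem_univ _) fun T _ hT =>
      Set.indicator_of_notMem (fun h => hT ((hmem T).1 h).symm) _,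
    Set.indicator_of_mem ((hmem _).2 rfl)]
  congr 1
  ext p
  simp only [mem_filter, mem_image, mem_univ, true_and, Subtype.exists, exists_prop]
  constructor
  · rintro ⟨⟨i, rfl⟩, hi⟩
    exact ⟨i, hi, rfl⟩
  · rintro ⟨i, hi, rfl⟩
    exact ⟨⟨i, rfl⟩, hi⟩

variable {g : Finset Ω → ℝ}
  (hg : ∀ (ι : Type) [Fintype ι], Measurable fun y : ι → Ω => g (univ.image y))
include hg

lemma measurable_comp_filter_image {ι : Type} [Fintype ι] [DecidablePred (· ∈ Q)]
    (hQ : MeasurableSet Q) :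
    Measurable fun x : ι → Ω => g ((univ.image x).filter (· ∈ Q)) := by
  classical
  rw [funext (comp_filter_image_eq_sum_indicator (ι := ι) g)]
  refine Finset.measurable_sum _ fun T _ => ((hg T).comp ?_).indicator ?_
  · exact measurable_pi_lambda _ fun i => measurable_pi_apply _
  · exact MeasurableSet.univ_pi fun i => by split_ifs; exacts [hQ, hQ.compl]

lemma integrable_comp_filter_image [IsFiniteMeasure μ] (hgb : ∀ V, |g V| ≤ #V) {ι : Type}
    [Fintype ι] [DecidablePred (· ∈ Q)] (hQ : MeasurableSet Q) :
    Integrable (fun x : ι → Ω => g ((univ.image x).filter (· ∈ Q))) (Measure.pi fun _ => μ) := by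
  refine Integrable.of_bound (measurable_comp_filter_image hg hQ).aestronglyMeasurable
    (Fintype.card ι) (ae_of_all _ fun x => (hgb _).trans ?_)
  exact_mod_cast (card_filter_le _ _).trans (card_image_le.trans card_univ.le)

theorem integral_filter_image_eq_integral_binomial [IsProbabilityMeasure μ]
    [DecidablePred (· ∈ Q)] (hgb : ∀ V, |g V| ≤ #V) (hQ : MeasurableSet Q) (hQ0 : μ Q ≠ 0)
    {p : unitInterval} (hp : μ.real Q = p) (n : ℕ) :
    ∫ x : Fin n → Ω, g ((univ.image x).filter (· ∈ Q)) ∂(Measure.pi fun _ => μ) =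
      ∫ j, ∫ y : Fin j → Ω, g (univ.image y) ∂(Measure.pi fun _ => μ[|Q]) ∂Bin(n, p) := by
  have hint : ∀ T : Finset (Fin n), Integrable
      ((Set.univ.pi fun i => if i ∈ T then Q else Qᶜ).indicator
        (fun x => g (univ.image fun i : T => x i))) (Measure.pi fun _ => μ) := by
    intro T
    refine (Integrable.of_bound (C := n) ?_ (ae_of_all _ fun x => (hgb _).trans ?_)).indicator ?_
    · exact ((hg T).comp
        (measurable_pi_lambda _ fun i => measurable_pi_apply _)).aestronglyMeasurable
    · exact_mod_cast card_image_le.trans (card_univ.trans_le (by simpa using T.card_le_univ))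
    · exact MeasurableSet.univ_pi fun i => by split_ifs; exacts [hQ, hQ.compl]
  have hterm : ∀ T : Finset (Fin n), ∫ x, (Set.univ.pi fun i => if i ∈ T then Q else Qᶜ).indicator
      (fun x => g (univ.image fun i : T => x i)) x ∂(Measure.pi fun _ => μ) =
        (1 - p) ^ (n - #T) * p ^ #T *
          ∫ y : Fin #T → Ω, g (univ.image y) ∂(Measure.pi fun _ => μ[|Q]) := by
    intro T
    rw [integral_indicator_univ_pi_ite hQ T (fun y => g (univ.image y)),
      setIntegral_univ_pi_eq_mul_integral_pi_cond hQ0,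
      integral_comp_image_univ_of_equiv T.equivFin.symm, probReal_compl_eq_one_sub hQ, hp,
      Fintype.card_fin, Fintype.card_coe, mul_assoc]
  simp_rw [comp_filter_image_eq_sum_indicator g]
  rw [integral_finsetSum _ fun T _ => hint T, sum_congr rfl fun T _ => hterm T, ← powerset_univ,
    sum_powerset_apply_card (fun j => (1 - (p : ℝ)) ^ (n - j) * p ^ j *
      ∫ y : Fin j → Ω, g (univ.image y) ∂(Measure.pi fun _ => μ[|Q])),
    card_univ, Fintype.card_fin, integral_binomial, Nat.range_succ_eq_Iic]
  refine sum_congr rfl fun j _ => ?_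
  simp only [nsmul_eq_mul, smul_eq_mul]
  ring

end Thinning

lemma ProbabilityTheory.map_cond_preimage {Ω Ω' : Type*} [MeasurableSpace Ω]
    [MeasurableSpace Ω'] (μ : Measure Ω) {f : Ω → Ω'} (hf : Measurable f) {s : Set Ω'}
    (hs : MeasurableSet s) :
    (μ[|f ⁻¹' s]).map f = (μ.map f)[|s] := by
  simp only [cond, Measure.map_smul, Measure.restrict_map hf hs, Measure.map_apply hf hs]

lemma ProbabilityTheory.cond_smul_measure {Ω : Type*} [MeasurableSpace Ω] (μ : Measure Ω)
    {c : ℝ≥0∞} (hc0 : c ≠ 0) (hc : c ≠ ∞) (s : Set Ω) : (c • μ)[|s] = μ[|s] := by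
  simp only [cond, Measure.smul_apply, Measure.restrict_smul, smul_smul, smul_eq_mul]
  rw [ENNReal.mul_inv (Or.inl hc0) (Or.inl hc), mul_comm c⁻¹, mul_assoc,
    ENNReal.inv_mul_cancel hc0 hc, mul_one]

section Cube

variable {d : ℕ}

def cube (a : Fin d → ℝ) (u : ℝ) : Set (EuclideanSpace ℝ (Fin d)) :=
  {y | ∀ i, y i ∈ Set.Icc (a i) (a i + u)}

lemma cube_eq_preimage_Icc (a : Fin d → ℝ) (u : ℝ) :
    cube a u = WithLp.ofLp ⁻¹' Set.Icc a (a + fun _ => u) := by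
  ext y
  simp [cube, Pi.le_def, forall_and]

lemma unitCube_eq_cube : unitCube d = cube 0 1 := by
  ext y
  simp [unitCube, cube]

lemma measurableSet_cube (a : Fin d → ℝ) (u : ℝ) : MeasurableSet (cube a u) := by
  rw [cube_eq_preimage_Icc]
  exact measurableSet_Icc.preimage (PiLp.volume_preserving_ofLp _).measurable

lemma volume_cube (a : Fin d → ℝ) {u : ℝ} (hu : 0 ≤ u) :
    volume (cube a u) = ENNReal.ofReal (u ^ d) := by
  rw [cube_eq_preimage_Icc, (PiLp.volume_preserving_ofLp _).measure_preimage
    measurableSet_Icc.nullMeasurableSet, Real.volume_Icc_pi]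
  simp [ENNReal.ofReal_pow hu]

lemma cube_subset_cube {a b : Fin d → ℝ} {u w : ℝ} (hab : ∀ i, b i ≤ a i)
    (hau : ∀ i, a i + u ≤ b i + w) : cube a u ⊆ cube b w := fun _ hy i =>
  ⟨(hab i).trans (hy i).1, (hy i).2.trans (hau i)⟩

lemma cube_grid_subset_cube {m : ℕ} {u : ℝ} (hu : 0 ≤ u) (v : Fin d → Fin m) :
    cube (fun i => v i * u) u ⊆ cube 0 (m * u) :=
  cube_subset_cube (fun i => by positivity) fun i => by
    have : (v i : ℝ) + 1 ≤ m := by exact_mod_cast (v i).isLt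
    simp only [Pi.zero_apply, zero_add]
    nlinarith

lemma exists_fin_mem_Icc (u : ℝ) {m : ℕ} (hm : 0 < m) {x : ℝ} (hx : x ∈ Set.Icc 0 (m * u)) :
    ∃ w : Fin m, x ∈ Set.Icc (w * u) (w * u + u) := by
  induction m with
  | zero => exact absurd hm le_rfl.not_gt
  | succ m ih =>
    by_cases h : 0 < m ∧ x ≤ m * u
    · obtain ⟨w, hw⟩ := ih h.1 ⟨hx.1, h.2⟩
      exact ⟨w.castSucc, by simpa using hw⟩
    · refine ⟨Fin.last m, ?_, by simpa [add_mul] using hx.2⟩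
      rcases Nat.eq_zero_or_pos m with rfl | hm0
      · simpa using hx.1
      · simpa using (not_le.1 (not_and.1 h hm0)).le

lemma cube_subset_iUnion_grid {m : ℕ} (hm : 0 < m) (u : ℝ) :
    cube (0 : Fin d → ℝ) (m * u) ⊆ ⋃ v : Fin d → Fin m, cube (fun i => v i * u) u := by
  intro y hy
  choose v hv using fun i => exists_fin_mem_Icc u hm (by simpa using hy i)
  exact Set.mem_iUnion.2 ⟨v, hv⟩

lemma measurableSet_unitCube : MeasurableSet (unitCube d) :=
  unitCube_eq_cube (d := d) ▸ measurableSet_cube 0 1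

lemma volume_unitCube : volume (unitCube d) = 1 := by
  simp [unitCube_eq_cube, volume_cube]

lemma uniformCube_eq_cond : uniformCube d = volume[|unitCube d] := by
  rw [ProbabilityTheory.cond, volume_unitCube, inv_one, one_smul, uniformCube]

instance : IsProbabilityMeasure (uniformCube d) := by
  rw [uniformCube_eq_cond]
  exact cond_isProbabilityMeasure_of_finite (by simp [volume_unitCube]) (by simp [volume_unitCube])

lemma uniformCube_apply_of_subset {s : Set (EuclideanSpace ℝ (Fin d))} (hs : s ⊆ unitCube d) :
    uniformCube d s = volume s := by
  rw [uniformCube, Measure.restrict_apply' measurableSet_unitCube, Set.inter_eq_left.2 hs]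

lemma dist_homothety (a : Fin d → ℝ) {u : ℝ} (hu : 0 < u) (z w : EuclideanSpace ℝ (Fin d)) :
    dist (WithLp.toLp 2 a + u • z) (WithLp.toLp 2 a + u • w) = u * dist z w := by
  rw [dist_add_left, dist_smul₀, Real.norm_of_nonneg hu.le]

lemma map_volume_homothety (a : Fin d → ℝ) {u : ℝ} (hu : u ≠ 0) :
    volume.map (fun z : EuclideanSpace ℝ (Fin d) => WithLp.toLp 2 a + u • z) =
      ENNReal.ofReal |(u ^ d)⁻¹| • volume := by
  have hcomp : (fun z : EuclideanSpace ℝ (Fin d) => WithLp.toLp 2 a + u • z) =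
      (WithLp.toLp 2 a + ·) ∘ (u • ·) := rfl
  rw [hcomp, ← Measure.map_map (measurable_const_add _) (measurable_const_smul u),
    Measure.map_addHaar_smul _ hu, Measure.map_smul, map_add_left_eq_self,
    finrank_euclideanSpace_fin]

lemma preimage_homothety_cube (a : Fin d → ℝ) {u : ℝ} (hu : 0 < u) :
    (fun z : EuclideanSpace ℝ (Fin d) => WithLp.toLp 2 a + u • z) ⁻¹' cube a u = unitCube d := by
  ext z
  simp only [Set.mem_preimage, cube, unitCube, Set.mem_ofPred_eq, Set.mem_Icc, PiLp.add_apply,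
    PiLp.smul_apply, smul_eq_mul, le_add_iff_nonneg_right, add_le_add_iff_left]
  refine forall_congr' fun i => ?_
  rw [mul_nonneg_iff_of_pos_left hu, mul_le_iff_le_one_right hu]

lemma map_uniformCube_homothety {a : Fin d → ℝ} {u : ℝ} (hu : 0 < u)
    (hsub : cube a u ⊆ unitCube d) :
    (uniformCube d).map (fun z => WithLp.toLp 2 a + u • z) = (uniformCube d)[|cube a u] := by
  have hφ : Measurable fun z : EuclideanSpace ℝ (Fin d) => WithLp.toLp 2 a + u • z := by fun_prop
  rw [uniformCube_eq_cond, cond_cond_eq_cond_inter' measurableSet_unitCube (measurableSet_cube a u)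
      (by simp [volume_unitCube]),
    Set.inter_eq_right.2 hsub, ← preimage_homothety_cube a hu,
    map_cond_preimage _ hφ (measurableSet_cube a u), map_volume_homothety a hu.ne',
    cond_smul_measure _ (by simp [hu.ne']) ENNReal.ofReal_ne_top]

end Cube

section Grid

variable {d k : ℕ}

lemma integral_maxColorable_cond_cube (hk : 1 ≤ k) {a : Fin d → ℝ} {u : ℝ} (hu : 0 < u)
    (hsub : cube a u ⊆ unitCube d) (r : ℝ) (j : ℕ) :
    ∫ y : Fin j → EuclideanSpace ℝ (Fin d), (maxColorable d k (u * r) (univ.image y) : ℝ)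
      ∂(Measure.pi fun _ => (uniformCube d)[|cube a u]) = EH d k r j := by
  have hφ : Measurable fun z : EuclideanSpace ℝ (Fin d) => WithLp.toLp 2 a + u • z := by fun_prop
  rw [← map_uniformCube_homothety hu hsub, ← Measure.pi_map_pi fun _ => hφ.aemeasurable,
    integral_map
      (by exact (measurable_pi_lambda _ fun i => hφ.comp (measurable_pi_apply i)).aemeasurable)
      (by exact (measurable_maxColorable_image_real hk _ _).aestronglyMeasurable), EH]
  congr with y
  rw [← maxColorable_image_of_dist_eq hk hu (dist_homothety a hu) (univ.image y), image_image]
  rfl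

lemma integral_maxColorable_filter_cube (hk : 1 ≤ k) {a : Fin d → ℝ} {u : ℝ} (hu : 0 < u)
    (hsub : cube a u ⊆ unitCube d) {p : unitInterval} (hp : (p : ℝ) = u ^ d)
    [DecidablePred (· ∈ cube a u)] (r : ℝ) (n : ℕ) :
    ∫ x : Fin n → EuclideanSpace ℝ (Fin d),
        (maxColorable d k (u * r) ((univ.image x).filter (· ∈ cube a u)) : ℝ)
        ∂(Measure.pi fun _ => uniformCube d) = ∫ j, EH d k r j ∂Bin(n, p) := by
  have hvol : uniformCube d (cube a u) = ENNReal.ofReal (u ^ d) := by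
    rw [uniformCube_apply_of_subset hsub, volume_cube _ hu.le]
  rw [integral_filter_image_eq_integral_binomial (measurable_maxColorable_image_real hk _)
    (abs_maxColorable_le_card _) (measurableSet_cube _ _) (by simp [hvol, hu])
    (by rw [measureReal_def, hvol, ENNReal.toReal_ofReal (by positivity), hp])]
  simp_rw [integral_maxColorable_cond_cube hk hu hsub]

open scoped Classical in
lemma EH_le_grid (hk : 1 ≤ k) {m : ℕ} (hm : 0 < m) {u : ℝ} (hu : 0 < u) (hmu : m * u ≤ 1)
    {p : unitInterval} (hp : (p : ℝ) = u ^ d) (r : ℝ) (n : ℕ) :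
    EH d k (u * r) n ≤ m ^ d * ∫ j, EH d k r j ∂Bin(n, p) + n * (1 - (m * u) ^ d) := by
  set Q : (Fin d → Fin m) → Set (EuclideanSpace ℝ (Fin d)) := fun v => cube (fun i => v i * u) u
  set C : Set (EuclideanSpace ℝ (Fin d)) := cube 0 (m * u)
  have hCsub : C ⊆ unitCube d := unitCube_eq_cube (d := d) ▸ cube_subset_cube (fun _ => le_rfl)
    fun _ => by simpa using hmu
  have hQsub : ∀ v, Q v ⊆ unitCube d := fun v => (cube_grid_subset_cube hu.le v).trans hCsub
  have hμC : (uniformCube d).real Cᶜ = 1 - (m * u) ^ d := by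
    rw [probReal_compl_eq_one_sub (measurableSet_cube _ _), measureReal_def,
      uniformCube_apply_of_subset hCsub, volume_cube _ (by positivity),
      ENNReal.toReal_ofReal (by positivity)]
  have hpt : ∀ x : Fin n → EuclideanSpace ℝ (Fin d),
      (maxColorable d k (u * r) (univ.image x) : ℝ) ≤
        ∑ v, (maxColorable d k (u * r) ((univ.image x).filter (· ∈ Q v)) : ℝ) +
          #(univ.filter (x · ∈ Cᶜ)) := fun x => by
    exact_mod_cast maxColorable_image_le_sum_filter_add Q (cube_subset_iUnion_grid hm u) x
  have hintQ : ∀ v, Integrable (fun x : Fin n → EuclideanSpace ℝ (Fin d) =>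
      (maxColorable d k (u * r) ((univ.image x).filter (· ∈ Q v)) : ℝ))
      (Measure.pi fun _ => uniformCube d) := fun v =>
    integrable_comp_filter_image (measurable_maxColorable_image_real hk _)
      (abs_maxColorable_le_card _) (measurableSet_cube _ _)
  have hintC := integrable_card_filter_mem (ι := Fin n) (uniformCube d)
    (measurableSet_cube 0 (m * u)).compl
  have hcell : ∀ v, ∫ x : Fin n → EuclideanSpace ℝ (Fin d),
      (maxColorable d k (u * r) ((univ.image x).filter (· ∈ Q v)) : ℝ)
        ∂(Measure.pi fun _ => uniformCube d) = ∫ j, EH d k r j ∂Bin(n, p) := fun v =>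
    integral_maxColorable_filter_cube hk hu (hQsub v) hp r n
  calc EH d k (u * r) n
      ≤ ∫ x, (∑ v, (maxColorable d k (u * r) ((univ.image x).filter (· ∈ Q v)) : ℝ) +
          #(univ.filter (x · ∈ Cᶜ))) ∂(Measure.pi fun _ => uniformCube d) :=
        integral_mono_of_nonneg (ae_of_all _ fun _ => Nat.cast_nonneg _)
          ((integrable_finsetSum _ fun v _ => hintQ v).add hintC) (ae_of_all _ hpt)
    _ = m ^ d * ∫ j, EH d k r j ∂Bin(n, p) + n * (1 - (m * u) ^ d) := by
        rw [integral_add (integrable_finsetSum _ fun v _ => hintQ v) hintC,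
          integral_finsetSum _ fun v _ => hintQ v, integral_card_filter_mem _
          (measurableSet_cube _ _).compl, hμC, Fintype.card_fin]
        simp [hcell]

end Grid

section Poisson

open Real
open scoped Nat unitInterval

lemma hasSum_poisson_mul_natCast (r : ℝ≥0) :
    HasSum (fun n : ℕ => exp (-r) * r ^ n / n ! * n) r := by
  refine (hasSum_nat_add_iff' 1).1 ?_
  have hshift : ∀ n : ℕ, exp (-r) * r ^ (n + 1) / (n + 1)! * ((n : ℝ) + 1) =
      r * (exp (-r) * r ^ n / n !) := fun n => by
    rw [Nat.factorial_succ]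
    push_cast
    field_simp
    ring
  simpa [hshift] using (hasSum_one_poissonMeasure r).mul_left (r : ℝ)

lemma integrable_natCast_poissonMeasure (r : ℝ≥0) : Integrable (fun n : ℕ => (n : ℝ)) Po(r) :=
  integrable_poissonMeasure_iff.2 <| by
    simpa using (hasSum_poisson_mul_natCast r).summable

lemma integral_natCast_poissonMeasure (r : ℝ≥0) : ∫ n, (n : ℝ) ∂Po(r) = r := by
  rw [integral_poissonMeasure]
  exact (hasSum_poisson_mul_natCast r).tsum_eq

lemma poisson_mul_poisson_eq_mul_binomial (r p : ℝ) {k n : ℕ} (hkn : k ≤ n) :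
    exp (-(p * r)) * (p * r) ^ k / k ! *
        (exp (-((1 - p) * r)) * ((1 - p) * r) ^ (n - k) / (n - k)!) =
      exp (-r) * r ^ n / n ! * (n.choose k * p ^ k * (1 - p) ^ (n - k)) := by
  have hexp : exp (-(p * r)) * exp (-((1 - p) * r)) = exp (-r) := by
    rw [← exp_add]
    ring_nf
  have hpow : r ^ k * r ^ (n - k) = r ^ n := by rw [← pow_add, Nat.add_sub_cancel' hkn]
  rw [Nat.cast_choose ℝ hkn, mul_pow, mul_pow, ← hexp, ← hpow]
  field_simp

theorem integral_integral_binomial_poissonMeasure (r : ℝ≥0) (p : I) {h : ℕ → ℝ}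
    (hh : Integrable h Po(unitInterval.toNNReal p * r)) :
    ∫ n, ∫ j, h j ∂Bin(n, p) ∂Po(r) = ∫ j, h j ∂Po(unitInterval.toNNReal p * r) := by
  have hf := integrable_poissonMeasure_iff.1 hh
  have hg := hasSum_one_poissonMeasure (unitInterval.toNNReal (σ p) * r)
  simp only [NNReal.coe_mul, unitInterval.coe_toNNReal, unitInterval.coe_symm_eq] at hf hg
  set f : ℕ → ℝ := fun j => exp (-(p * r)) * (p * r) ^ j / j ! * h j
  set g : ℕ → ℝ := fun i => exp (-((1 - p) * r)) * ((1 - p) * r) ^ i / (i)!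
  have hf' : Summable fun j => ‖f j‖ := by
    simpa [f, abs_mul, abs_of_nonneg, unitInterval.nonneg] using hf
  have hg' : Summable fun i => ‖g i‖ := by
    simpa [g, abs_of_nonneg, abs_of_nonneg (unitInterval.one_minus_nonneg p)] using hg.summable
  calc ∫ n, ∫ j, h j ∂Bin(n, p) ∂Po(r)
      = ∑' n, ∑ k ∈ range (n + 1), f k * g (n - k) := by
        simp only [integral_poissonMeasure, integral_binomial, smul_eq_mul, ← Nat.range_succ_eq_Iic,
          mul_sum]
        refine tsum_congr fun n => sum_congr rfl fun k hk => ?_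
        simp only [f, g]
        rw [mul_right_comm _ (h k), poisson_mul_poisson_eq_mul_binomial _ _
          (Nat.lt_succ_iff.1 (mem_range.1 hk))]
        ring
    _ = (∑' j, f j) * ∑' i, g i := (tsum_mul_tsum_eq_tsum_sum_range_of_summable_norm hf' hg').symm
    _ = ∫ j, h j ∂Po(unitInterval.toNNReal p * r) := by
        rw [hg.tsum_eq, mul_one, integral_poissonMeasure]
        simp [f, smul_eq_mul]

end Poisson

lemma tendsto_sInf_image_Ioi_of_le_add {f : ℝ → ℝ} (hf : BddBelow (f '' Set.Ioi 0))
    {e : ℝ → ℝ → ℝ} (hle : ∀ s t, 0 < s → s ≤ t → f t ≤ f s + e s t)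
    (he : ∀ s, 0 < s → Tendsto (e s) atTop (nhds 0)) :
    Tendsto f atTop (nhds (sInf (f '' Set.Ioi 0))) := by
  have hne : (f '' Set.Ioi 0).Nonempty := ⟨f 1, 1, Set.mem_Ioi.2 one_pos, rfl⟩
  refine tendsto_order.2 ⟨fun a ha => ?_, fun a ha => ?_⟩
  · filter_upwards [eventually_gt_atTop 0] with t ht
    exact ha.trans_le (csInf_le hf ⟨t, ht, rfl⟩)
  · obtain ⟨_, ⟨s, hs, rfl⟩, hsa⟩ := exists_lt_of_csInf_lt hne ha
    filter_upwards [eventually_ge_atTop s, (he s hs).eventually (gt_mem_nhds (sub_pos.2 hsa))]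
      with t hst hest
    linarith [hle s t hs hst]

section Renormalization

open scoped unitInterval

variable {d k : ℕ}

lemma EF_eq_integral (d k : ℕ) (lam t : ℝ) :
    EF d k lam t = ∫ n, EH d k (1 / t) n ∂Po((lam * t ^ d).toNNReal) := by
  rw [integral_poissonMeasure]
  rfl

lemma EH_nonneg (r : ℝ) (n : ℕ) : 0 ≤ EH d k r n :=
  integral_nonneg fun _ => Nat.cast_nonneg _

lemma abs_EH_le (r : ℝ) (n : ℕ) : |EH d k r n| ≤ n := by
  rw [abs_of_nonneg (EH_nonneg r n)]
  refine (integral_mono_of_nonneg (ae_of_all _ fun _ => Nat.cast_nonneg _)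
    (integrable_const (n : ℝ)) (ae_of_all _ fun x => ?_)).trans_eq (by simp)
  have := (maxColorable_le_card (k := k) (r := r) (univ.image x)).trans
    (card_image_le.trans card_univ.le)
  simpa using (Nat.cast_le (α := ℝ)).2 this

lemma abs_integral_binomial_le {n : ℕ} {p : I} {h : ℕ → ℝ} (hh : ∀ j, |h j| ≤ j) :
    |∫ j, h j ∂Bin(n, p)| ≤ n :=
  (abs_integral_le_integral_abs).trans <| (integral_mono_ae (integrable_binomial _)
    (integrable_const (n : ℝ)) ((ae_le_of_hasLaw_binomial HasLaw.id).mono fun j hj =>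
      (hh j).trans (Nat.cast_le.2 hj))).trans_eq (by simp)

lemma integrable_poissonMeasure_of_le_natCast {r : ℝ≥0} {f : ℕ → ℝ} (hf : ∀ n, |f n| ≤ n) :
    Integrable f Po(r) :=
  (integrable_natCast_poissonMeasure r).mono' .of_discrete (ae_of_all _ hf)

lemma EF_le_floor_pow_mul_EF_add (hk : 1 ≤ k) {lam s t : ℝ} (hlam : 0 < lam) (hs : 0 < s)
    (hst : s ≤ t) :
    EF d k lam t ≤
      ⌊t / s⌋₊ ^ d * EF d k lam s + (1 - (⌊t / s⌋₊ * (s / t)) ^ d) * (lam * t ^ d) := by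
  have ht : 0 < t := hs.trans_le hst
  set m := ⌊t / s⌋₊
  set u := s / t
  have hu : 0 < u := div_pos hs ht
  have hm : 0 < m := Nat.floor_pos.2 ((one_le_div hs).2 hst)
  have hmu : m * u ≤ 1 := by
    calc (m : ℝ) * u ≤ t / s * (s / t) := by gcongr; exact Nat.floor_le (by positivity)
      _ = 1 := by field_simp
  set p : I := ⟨u ^ d, pow_nonneg hu.le d, pow_le_one₀ hu.le ((div_le_one ht).2 hst)⟩
  have hB : Integrable (fun n => ∫ j, EH d k (1 / s) j ∂Bin(n, p)) Po((lam * t ^ d).toNNReal) :=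
    integrable_poissonMeasure_of_le_natCast fun n => abs_integral_binomial_le (abs_EH_le _)
  have hN := integrable_natCast_poissonMeasure (lam * t ^ d).toNNReal
  have hrate : unitInterval.toNNReal p * (lam * t ^ d).toNNReal = (lam * s ^ d).toNNReal := by
    ext
    simp only [NNReal.coe_mul, unitInterval.coe_toNNReal, p, u]
    rw [Real.coe_toNNReal _ (by positivity), Real.coe_toNNReal _ (by positivity), div_pow]
    field_simp
  have hradius : 1 / t = u * (1 / s) := by
    simp only [u]
    field_simp
  calc EF d k lam t
      ≤ ∫ n, (m ^ d * ∫ j, EH d k (1 / s) j ∂Bin(n, p) + n * (1 - (m * u) ^ d))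
          ∂Po((lam * t ^ d).toNNReal) := by
        rw [EF_eq_integral, hradius]
        exact integral_mono_of_nonneg (ae_of_all _ fun n => EH_nonneg _ _)
          ((hB.const_mul _).add (hN.mul_const _))
          (ae_of_all _ fun n => EH_le_grid hk hm hu hmu rfl _ n)
    _ = m ^ d * EF d k lam s + (1 - (m * u) ^ d) * (lam * t ^ d) := by
        rw [integral_add (hB.const_mul _) (hN.mul_const _), integral_const_mul,
          integral_mul_const, integral_natCast_poissonMeasure,
          integral_integral_binomial_poissonMeasure _ _
            (hrate ▸ integrable_poissonMeasure_of_le_natCast (abs_EH_le _)),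
          hrate, EF_eq_integral, Real.coe_toNNReal _ (by positivity)]
        ring

lemma Fbar_nonneg {lam t : ℝ} (hlam : 0 < lam) (ht : 0 < t) : 0 ≤ Fbar d k lam t :=
  div_nonneg ((EF_eq_integral d k lam t).symm ▸ integral_nonneg fun _ => EH_nonneg _ _)
    (by positivity)

lemma Fbar_le_Fbar_add (hk : 1 ≤ k) {lam s t : ℝ} (hlam : 0 < lam) (hs : 0 < s) (hst : s ≤ t) :
    Fbar d k lam t ≤ Fbar d k lam s + (1 - (1 - s / t) ^ d) := by
  have ht : 0 < t := hs.trans_le hst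
  set α : ℝ := ⌊t / s⌋₊ * (s / t)
  have hα1 : α ≤ 1 := by
    calc α ≤ t / s * (s / t) := by
          simp only [α]; gcongr; exact Nat.floor_le (by positivity)
      _ = 1 := by field_simp
  have hα : 1 - s / t ≤ α := by
    calc 1 - s / t = (t / s - 1) * (s / t) := by field_simp
      _ ≤ α := by simp only [α]; gcongr; exact (Nat.sub_one_lt_floor _).le
  have hpow : (1 - s / t) ^ d ≤ α ^ d :=
    pow_le_pow_left₀ (sub_nonneg.2 ((div_le_one ht).2 hst)) hα d
  have hFt : Fbar d k lam t ≤ α ^ d * Fbar d k lam s + (1 - α ^ d) := by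
    have hscale : α ^ d * (lam * t ^ d) = ⌊t / s⌋₊ ^ d * (lam * s ^ d) := by
      simp only [α, mul_pow, div_pow]
      field_simp
    rw [Fbar, div_le_iff₀ (by positivity)]
    refine (EF_le_floor_pow_mul_EF_add hk hlam hs hst).trans_eq ?_
    rw [Fbar, add_mul, mul_right_comm, hscale, mul_assoc, mul_div_cancel₀ _ (by positivity)]
  nlinarith [Fbar_nonneg (d := d) (k := k) hlam hs, pow_le_one₀ (by positivity) hα1 (n := d)]

end Renormalization

theorem tendsto_Fbar_general (d k : ℕ) (hk : 1 ≤ k) (lam : ℝ) (hlam : 0 < lam) :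
    Tendsto (fun t : ℝ => Fbar d k lam t) atTop (nhds (aConst d k lam)) := by
  have ha : aConst d k lam = sInf (Fbar d k lam '' Set.Ioi 0) := by
    simp only [aConst, Set.image, Set.mem_Ioi, eq_comm]
  rw [ha]
  refine tendsto_sInf_image_Ioi_of_le_add ⟨0, ?_⟩
    (fun s t hs hst => Fbar_le_Fbar_add hk hlam hs hst) fun s _ => ?_
  · rintro _ ⟨t, ht, rfl⟩
    exact Fbar_nonneg hlam ht
  · have h : Tendsto (fun t : ℝ => s / t) atTop (nhds 0) :=
      tendsto_const_nhds.div_atTop tendsto_id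
    simpa using ((h.const_sub 1).pow d).const_sub 1

/-- the limit `lim_{t→∞} \bar F_{k,λ}(t)` exists and equals
`a_{k,λ} = inf_{t>0} \bar F_{k,λ}(t)`. -/
theorem tendsto_Fbar (d k : ℕ) (hd : 1 ≤ d) (hk : 1 ≤ k) (lam : ℝ) (hlam : 0 < lam) :
    Tendsto (fun t : ℝ => Fbar d k lam t) atTop (nhds (aConst d k lam)) :=
  tendsto_Fbar_general d k hk lam hlam
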